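/- (Per-client alignment lower bound under exact constraints.) Let f : ℝ^d → ℝ be differentiable with L-Lipschitz gradient and ‖∇f(θ)‖ ≤ G_f for all θ. Fix η_l > 0, K ≥ 1, a point θ ∈ ℝ^d, and let g_loc = η_l Σ_{k=0}^{K−1} ∇f(θ^{k}) be the accumulated update of the local gradient-descent trajectory θ^{0} = θ, θ^{k+1} = θ^{k} − η_l ∇f(θ^{k}). Suppose g_loc ≠ 0 and g ∈ ℝ^d satisfies ⟨g_loc/‖g_loc‖, g⟩ = ρ for some ρ > 0, with ‖g‖ ≤ G. Then ⟨∇f(θ), g⟩ ≥ ρ ‖∇f(θ)‖ − (L G_f/2)(ρ + G) η_l (K − 1). -/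

import Mathlib

open scoped InnerProductSpace BigOperators

/-- Local gradient-descent trajectory. -/
noncomputable def traj {E : Type*} [NormedAddCommGroup E] [InnerProductSpace ℝ E]
    [CompleteSpace E] (f : E → ℝ) (ηl : ℝ) (θ : E) : ℕ → E
  | 0 => θ
  | k + 1 => traj f ηl θ k - ηl • gradient f (traj f ηl θ k)

/-!
Writing `S = ∑_{k<K} ∇f(θᵏ)`, the alignment constraint says `⟪S, g⟫ = ρ‖S‖`. Each iterate moves
by at most `η_l G_f`, so `‖∇f(θᵏ) - ∇f(θ)‖ ≤ L G_f η_l k` and the drift `S - K ∇f(θ)` has norm at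
most `D = L G_f η_l K(K-1)/2`. Then `K⟪∇f(θ), g⟫ = ⟪S, g⟫ - ⟪S - K∇f(θ), g⟫ ≥ ρ(K‖∇f(θ)‖ - D) - DG`,
and dividing by `K` gives the bound.
-/

lemma nonneg_of_norm_sub_le_mul_norm_sub {E F : Type*} [NormedAddCommGroup E]
    [SeminormedAddCommGroup F] {φ : E → F} {L : ℝ} (hφ : ∀ x y, ‖φ x - φ y‖ ≤ L * ‖x - y‖)
    {x y : E} (hxy : x ≠ y) : 0 ≤ L :=
  nonneg_of_mul_nonneg_left ((norm_nonneg _).trans (hφ x y))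
    (norm_pos_iff.mpr (sub_ne_zero.mpr hxy))

section InnerProductSpace

variable {E : Type*} [NormedAddCommGroup E] [InnerProductSpace ℝ E]

lemma real_inner_eq_mul_norm_of_inner_inv_norm_smul {x y : E} {ρ : ℝ}
    (h : ⟪‖x‖⁻¹ • x, y⟫_ℝ = ρ) : ⟪x, y⟫_ℝ = ρ * ‖x‖ := by
  rcases eq_or_ne x 0 with rfl | hx
  · simp
  · rw [← h, real_inner_smul_left]
    field_simp [norm_ne_zero_iff.mpr hx]

lemma norm_sum_range_sub_smul_le {v : ℕ → E} {u : E} {c : ℝ} (hv : ∀ k, ‖v k - u‖ ≤ c * k)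
    (K : ℕ) : ‖∑ k ∈ Finset.range K, v k - (K : ℝ) • u‖ ≤ c * (K * (K - 1) / 2) := by
  induction K with
  | zero => simp
  | succ K ih =>
    have hsplit : ∑ k ∈ Finset.range (K + 1), v k - ((K + 1 : ℕ) : ℝ) • u
        = (∑ k ∈ Finset.range K, v k - (K : ℝ) • u) + (v K - u) := by
      rw [Finset.sum_range_succ]; push_cast; rw [add_smul, one_smul]; abel
    calc _ ≤ c * (K * (K - 1) / 2) + c * K :=
          hsplit ▸ (norm_add_le _ _).trans (add_le_add ih (hv K))
      _ = c * (((K + 1 : ℕ) : ℝ) * ((K + 1 : ℕ) - 1) / 2) := by push_cast; ring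

lemma mul_inner_ge_of_inner_eq_mul_norm {u s g : E} {c ρ D G : ℝ} (hc : 0 ≤ c) (hρ : 0 ≤ ρ)
    (hs : ‖s - c • u‖ ≤ D) (hsg : ⟪s, g⟫_ℝ = ρ * ‖s‖) (hg : ‖g‖ ≤ G) :
    c * (ρ * ‖u‖) - D * (ρ + G) ≤ c * ⟪u, g⟫_ℝ := by
  have hnorm : c * ‖u‖ - D ≤ ‖s‖ := by
    have := norm_sub_norm_le (c • u) s
    rw [norm_smul, Real.norm_of_nonneg hc, norm_sub_rev] at this
    linarith
  have hdrift : ⟪s - c • u, g⟫_ℝ ≤ D * G :=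
    (real_inner_le_norm _ _).trans (mul_le_mul hs hg (norm_nonneg g) ((norm_nonneg _).trans hs))
  rw [inner_sub_left, real_inner_smul_left, hsg] at hdrift
  nlinarith [mul_le_mul_of_nonneg_left hnorm hρ]

end InnerProductSpace

section Gradient

variable {E : Type*} [NormedAddCommGroup E] [InnerProductSpace ℝ E] [CompleteSpace E]
  {f : E → ℝ} {ηl Gf : ℝ}

lemma norm_traj_sub_le (hGf : ∀ x, ‖gradient f x‖ ≤ Gf) (hηl : 0 ≤ ηl) (θ : E) (k : ℕ) :
    ‖traj f ηl θ k - θ‖ ≤ ηl * k * Gf := by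
  induction k with
  | zero => simp [traj]
  | succ k ih =>
    have hstep : ‖ηl • gradient f (traj f ηl θ k)‖ ≤ ηl * Gf := by
      rw [norm_smul, Real.norm_of_nonneg hηl]
      exact mul_le_mul_of_nonneg_left (hGf _) hηl
    calc ‖traj f ηl θ (k + 1) - θ‖
        = ‖(traj f ηl θ k - θ) - ηl • gradient f (traj f ηl θ k)‖ := by
          rw [traj, sub_right_comm]
      _ ≤ ηl * k * Gf + ηl * Gf := (norm_sub_le _ _).trans (add_le_add ih hstep)
      _ = ηl * (k + 1 : ℕ) * Gf := by push_cast; ring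

lemma norm_gradient_traj_sub_le {L : ℝ}
    (hLip : ∀ x y, ‖gradient f x - gradient f y‖ ≤ L * ‖x - y‖) (hL : 0 ≤ L)
    (hGf : ∀ x, ‖gradient f x‖ ≤ Gf) (hηl : 0 ≤ ηl) (θ : E) (k : ℕ) :
    ‖gradient f (traj f ηl θ k) - gradient f θ‖ ≤ L * Gf * ηl * k :=
  calc _ ≤ L * ‖traj f ηl θ k - θ‖ := hLip _ _
    _ ≤ L * (ηl * k * Gf) := mul_le_mul_of_nonneg_left (norm_traj_sub_le hGf hηl θ k) hL
    _ = L * Gf * ηl * k := by ring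

end Gradient

theorem per_client_alignment_lower_bound_general {d : ℕ}
    (f : EuclideanSpace ℝ (Fin d) → ℝ) (L Gf : ℝ)
    (hLip : ∀ x y, ‖gradient f x - gradient f y‖ ≤ L * ‖x - y‖)
    (hGf : ∀ x, ‖gradient f x‖ ≤ Gf)
    (ηl : ℝ) (hηl : 0 < ηl) (K : ℕ) (hK : 1 ≤ K)
    (θ : EuclideanSpace ℝ (Fin d))
    (gloc : EuclideanSpace ℝ (Fin d))
    (hgloc : gloc = ηl • ∑ k ∈ Finset.range K, gradient f (traj f ηl θ k))
    (g : EuclideanSpace ℝ (Fin d)) (ρ : ℝ) (hρ : 0 < ρ)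
    (halign : ⟪‖gloc‖⁻¹ • gloc, g⟫_ℝ = ρ)
    (G : ℝ) (hG : ‖g‖ ≤ G) :
    ρ * ‖gradient f θ‖ - L * Gf / 2 * (ρ + G) * (ηl * ((K : ℝ) - 1)) ≤
      ⟪gradient f θ, g⟫_ℝ := by
  set S := ∑ k ∈ Finset.range K, gradient f (traj f ηl θ k)
  have hg : g ≠ 0 := by
    rintro rfl
    rw [inner_zero_right] at halign
    exact hρ.ne halign
  have hL : 0 ≤ L := nonneg_of_norm_sub_le_mul_norm_sub hLip hg
  have hSg : ⟪S, g⟫_ℝ = ρ * ‖S‖ := by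
    have h := real_inner_eq_mul_norm_of_inner_inv_norm_smul halign
    rw [hgloc, real_inner_smul_left, norm_smul, Real.norm_of_nonneg hηl.le, mul_left_comm] at h
    exact mul_left_cancel₀ hηl.ne' h
  have hdrift := norm_sum_range_sub_smul_le
    (norm_gradient_traj_sub_le hLip hL hGf hηl.le θ) K
  have hK0 : (0 : ℝ) < K := by exact_mod_cast hK
  have key := mul_inner_ge_of_inner_eq_mul_norm hK0.le hρ.le hdrift hSg hG
  refine le_of_mul_le_mul_left ?_ hK0
  linear_combination key

/-- **Per-client alignment lower bound under exact constraints.**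
If `g_loc ≠ 0` is the accumulated local update and `⟪g_loc/‖g_loc‖, g⟫ = ρ > 0` with
`‖g‖ ≤ G`, then `⟪∇f(θ), g⟫ ≥ ρ‖∇f(θ)‖ − (L G_f/2)(ρ + G) η_l (K − 1)`. -/
theorem per_client_alignment_lower_bound {d : ℕ}
    (f : EuclideanSpace ℝ (Fin d) → ℝ) (L Gf : ℝ)
    (hdiff : Differentiable ℝ f)
    (hLip : ∀ x y, ‖gradient f x - gradient f y‖ ≤ L * ‖x - y‖)
    (hGf : ∀ x, ‖gradient f x‖ ≤ Gf)
    (ηl : ℝ) (hηl : 0 < ηl) (K : ℕ) (hK : 1 ≤ K)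
    (θ : EuclideanSpace ℝ (Fin d))
    (gloc : EuclideanSpace ℝ (Fin d))
    (hgloc : gloc = ηl • ∑ k ∈ Finset.range K, gradient f (traj f ηl θ k))
    (hne : gloc ≠ 0)
    (g : EuclideanSpace ℝ (Fin d)) (ρ : ℝ) (hρ : 0 < ρ)
    (halign : ⟪‖gloc‖⁻¹ • gloc, g⟫_ℝ = ρ)
    (G : ℝ) (hG : ‖g‖ ≤ G) :
    ρ * ‖gradient f θ‖ - L * Gf / 2 * (ρ + G) * (ηl * ((K : ℝ) - 1)) ≤
      ⟪gradient f θ, g⟫_ℝ :=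
  per_client_alignment_lower_bound_general f L Gf hLip hGf ηl hηl K hK θ gloc hgloc g ρ hρ halign G
    hG
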